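/- arXiv:1811.08779 — 2 statements merged into one kernel-verified Lean document; each statement's English description precedes it below -/
import Mathlib

section
/- Define for a p×q matrix M and s ≥ 1 the adaptive restricted eigenvalue φ_M^2(s) = min{ δ'MM'δ / (q||δ_S||_2^2) : δ ∈ R^p\{0}, ||δ_{S^c}||_1 ≤ 3√s||δ_S||_2, |S| ≤ s, δ_S ≠ 0 }. If A, Σ ∈ R^{p×q} satisfy 32 s ||A − Σ||_∞ ||Σ||_∞ + 16 s ||A − Σ||_∞^2 ≤ φ_Σ^2(s)/2, then φ_A^2(s) ≥ φ_Σ^2(s)/2. -/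
open Matrix

noncomputable def vl1 {p : ℕ} (x : Fin p → ℝ) : ℝ := ∑ i, |x i|
noncomputable def vl2 {p : ℕ} (x : Fin p → ℝ) : ℝ := Real.sqrt (∑ i, (x i) ^ 2)
noncomputable def mmax {p q : ℕ} (M : Matrix (Fin p) (Fin q) ℝ) : ℝ := ⨆ i, ⨆ j, |M i j|
noncomputable def restr {p : ℕ} (x : Fin p → ℝ) (S : Finset (Fin p)) : Fin p → ℝ :=
  fun i => if i ∈ S then x i else 0

/-- adaptive restricted eigenvalue of a p×q matrix M at sparsity s -/
noncomputable def are (p q s : ℕ) (M : Matrix (Fin p) (Fin q) ℝ) : ℝ :=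
  sInf { r : ℝ | ∃ (δ : Fin p → ℝ) (S : Finset (Fin p)),
    δ ≠ 0 ∧ S.card ≤ s ∧ restr δ S ≠ 0 ∧
    vl1 (restr δ Sᶜ) ≤ 3 * Real.sqrt s * vl2 (restr δ S) ∧
    r = (δ ⬝ᵥ (M * M.transpose).mulVec δ) / ((q : ℝ) * vl2 (restr δ S) ^ 2) }

lemma quad {p q : ℕ} (M : Matrix (Fin p) (Fin q) ℝ) (δ : Fin p → ℝ) :
    δ ⬝ᵥ (M * M.transpose).mulVec δ = ∑ j, (∑ i, δ i * M i j)^2 := by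
  rw [← mulVec_mulVec, dotProduct_mulVec, mulVec_transpose]
  simp only [dotProduct, vecMul, dotProduct, sq]

lemma abs_le_mmax {p q : ℕ} (M : Matrix (Fin p) (Fin q) ℝ) (i : Fin p) (j : Fin q) :
    |M i j| ≤ mmax M :=
  le_trans (le_ciSup (f := fun j => |M i j|) (Set.Finite.bddAbove (Set.finite_range _)) j)
    (le_ciSup (f := fun i => ⨆ j, |M i j|) (Set.Finite.bddAbove (Set.finite_range _)) i)

lemma mmax_nonneg {p q : ℕ} (M : Matrix (Fin p) (Fin q) ℝ) : 0 ≤ mmax M :=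
  Real.iSup_nonneg fun _ => Real.iSup_nonneg fun _ => abs_nonneg _

lemma vl1_nonneg {p : ℕ} (x : Fin p → ℝ) : 0 ≤ vl1 x :=
  Finset.sum_nonneg fun _ _ => abs_nonneg _

lemma entry_bd {p q : ℕ} (M : Matrix (Fin p) (Fin q) ℝ) (δ : Fin p → ℝ) (j : Fin q) :
    |∑ i, δ i * M i j| ≤ mmax M * vl1 δ := by
  calc |∑ i, δ i * M i j| ≤ ∑ i, |δ i * M i j| := Finset.abs_sum_le_sum_abs _ _
    _ ≤ ∑ i, |δ i| * mmax M := by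
        refine Finset.sum_le_sum fun i _ => ?_
        rw [abs_mul]
        exact mul_le_mul_of_nonneg_left (abs_le_mmax M i j) (abs_nonneg _)
    _ = mmax M * vl1 δ := by
        rw [vl1, Finset.mul_sum]
        exact Finset.sum_congr rfl fun i _ => mul_comm _ _

lemma vl1_split {p : ℕ} (δ : Fin p → ℝ) (S : Finset (Fin p)) :
    vl1 δ = vl1 (restr δ S) + vl1 (restr δ Sᶜ) := by
  unfold vl1 restr
  rw [← Finset.sum_add_distrib]
  refine Finset.sum_congr rfl fun i _ => ?_
  by_cases hi : i ∈ S <;> simp [hi]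

lemma vl2_sq {p : ℕ} (x : Fin p → ℝ) : vl2 x ^ 2 = ∑ i, (x i) ^ 2 :=
  Real.sq_sqrt (Finset.sum_nonneg fun _ _ => sq_nonneg _)

lemma vl1_restr_le {p : ℕ} (δ : Fin p → ℝ) (S : Finset (Fin p)) :
    vl1 (restr δ S) ≤ Real.sqrt S.card * vl2 (restr δ S) := by
  have h1 : vl1 (restr δ S) = ∑ i ∈ S, |δ i| := by
    simp [vl1, restr, apply_ite abs, Finset.sum_ite_mem]
  have h2 : (∑ i, (restr δ S i) ^ 2) = ∑ i ∈ S, δ i ^ 2 := by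
    simp [restr, apply_ite (fun x : ℝ => x ^ 2), Finset.sum_ite_mem]
  have cs : (∑ i ∈ S, |δ i| * 1) ^ 2 ≤ (∑ i ∈ S, |δ i| ^ 2) * (∑ i ∈ S, (1 : ℝ) ^ 2) :=
    Finset.sum_mul_sq_le_sq_mul_sq _ _ _
  simp only [mul_one, sq_abs, one_pow, Finset.sum_const, nsmul_eq_mul] at cs
  have hnn : 0 ≤ ∑ i ∈ S, |δ i| := Finset.sum_nonneg fun _ _ => abs_nonneg _
  have hv2 : vl2 (restr δ S) = Real.sqrt (∑ i ∈ S, δ i ^ 2) := by rw [vl2, h2]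
  rw [h1, hv2, ← Real.sqrt_mul (Nat.cast_nonneg _)]
  refine (Real.le_sqrt hnn (by positivity)).mpr ?_
  calc (∑ i ∈ S, |δ i|) ^ 2 ≤ (∑ i ∈ S, δ i ^ 2) * S.card := cs
    _ = (S.card : ℝ) * ∑ i ∈ S, δ i ^ 2 := by ring

lemma are_nonneg (p q s : ℕ) (M : Matrix (Fin p) (Fin q) ℝ) : 0 ≤ are p q s M := by
  rw [are]
  apply Real.sInf_nonneg
  rintro r ⟨δ, S, -, -, -, -, rfl⟩
  rw [quad]
  positivity

set_option maxHeartbeats 1000000 in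
theorem stmt14 (p q s : ℕ) (hs : 0 < s)
    (A Sig : Matrix (Fin p) (Fin q) ℝ)
    (h : 32 * (s : ℝ) * mmax (A - Sig) * mmax Sig
        + 16 * (s : ℝ) * mmax (A - Sig) ^ 2 ≤ are p q s Sig / 2) :
    are p q s A ≥ are p q s Sig / 2 := by
  classical
  set m := mmax (A - Sig) with hm
  set mS := mmax Sig with hmSdef
  have hm0 : 0 ≤ m := mmax_nonneg _
  have hmS0 : 0 ≤ mS := mmax_nonneg _
  have hSig0 : 0 ≤ are p q s Sig := are_nonneg _ _ _ _
  set setA := { r : ℝ | ∃ (δ : Fin p → ℝ) (S : Finset (Fin p)),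
    δ ≠ 0 ∧ S.card ≤ s ∧ restr δ S ≠ 0 ∧
    vl1 (restr δ Sᶜ) ≤ 3 * Real.sqrt s * vl2 (restr δ S) ∧
    r = (δ ⬝ᵥ (A * A.transpose).mulVec δ) / ((q : ℝ) * vl2 (restr δ S) ^ 2) } with hsetA
  set setS := { r : ℝ | ∃ (δ : Fin p → ℝ) (S : Finset (Fin p)),
    δ ≠ 0 ∧ S.card ≤ s ∧ restr δ S ≠ 0 ∧
    vl1 (restr δ Sᶜ) ≤ 3 * Real.sqrt s * vl2 (restr δ S) ∧
    r = (δ ⬝ᵥ (Sig * Sig.transpose).mulVec δ) / ((q : ℝ) * vl2 (restr δ S) ^ 2) } with hsetS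
  have hbddS : BddBelow setS := by
    refine ⟨0, ?_⟩
    rintro x ⟨δ, S, -, -, -, -, rfl⟩
    rw [quad]
    positivity
  have hareA : are p q s A = sInf setA := rfl
  have hareS : are p q s Sig = sInf setS := rfl
  have key : ∀ r ∈ setA, are p q s Sig / 2 ≤ r := by
    rintro r ⟨δ, S, hδ, hcard, hres, hcone, rfl⟩
    set v2 := vl2 (restr δ S) with hv2def
    have hv2nn : 0 ≤ v2 := Real.sqrt_nonneg _
    have hn : v2 ^ 2 = ∑ i, (restr δ S i) ^ 2 := vl2_sq _
    have hnpos : 0 < v2 ^ 2 := by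
      rw [hn]
      obtain ⟨i, hi⟩ := Function.ne_iff.mp hres
      have h1 : (0:ℝ) < (restr δ S i) ^ 2 := by
        have h2 := abs_pos.mpr hi
        nlinarith [sq_abs (restr δ S i)]
      exact h1.trans_le (Finset.single_le_sum (f := fun i => (restr δ S i) ^ 2)
        (fun i _ => sq_nonneg _) (Finset.mem_univ i))
    have hL : vl1 δ ≤ 4 * Real.sqrt s * v2 := by
      have h1 : vl1 (restr δ S) ≤ Real.sqrt S.card * v2 := vl1_restr_le δ S
      have h2 : Real.sqrt S.card ≤ Real.sqrt s := Real.sqrt_le_sqrt (by exact_mod_cast hcard)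
      have h3 : vl1 δ = vl1 (restr δ S) + vl1 (restr δ Sᶜ) := vl1_split δ S
      nlinarith [Real.sqrt_nonneg (s:ℝ), Real.sqrt_nonneg (S.card:ℝ)]
    have hL2 : vl1 δ ^ 2 ≤ 16 * s * v2 ^ 2 := by
      have h0 : 0 ≤ vl1 δ := vl1_nonneg δ
      have h1 : Real.sqrt (s:ℝ) ^ 2 = (s:ℝ) := Real.sq_sqrt (Nat.cast_nonneg s)
      nlinarith [Real.sqrt_nonneg (s:ℝ)]
    have hkeyj : ∀ j : Fin q, (∑ i, δ i * Sig i j) ^ 2 - 2 * (mS * m) * vl1 δ ^ 2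
        ≤ (∑ i, δ i * A i j) ^ 2 := by
      intro j
      have hv : |∑ i, δ i * Sig i j| ≤ mS * vl1 δ := entry_bd Sig δ j
      have hw : |∑ i, δ i * (A - Sig) i j| ≤ m * vl1 δ := entry_bd (A - Sig) δ j
      have hsplit : (∑ i, δ i * A i j) = (∑ i, δ i * Sig i j) + ∑ i, δ i * (A - Sig) i j := by
        rw [← Finset.sum_add_distrib]
        exact Finset.sum_congr rfl fun i _ => by simp [Matrix.sub_apply]; ring
      have hvw : |∑ i, δ i * Sig i j| * |∑ i, δ i * (A - Sig) i j| ≤ (mS * vl1 δ) * (m * vl1 δ) :=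
        mul_le_mul hv hw (abs_nonneg _) (le_trans (abs_nonneg _) hv)
      have hneg : -(|∑ i, δ i * Sig i j| * |∑ i, δ i * (A - Sig) i j|)
          ≤ (∑ i, δ i * Sig i j) * (∑ i, δ i * (A - Sig) i j) := by
        rw [← abs_mul]; exact neg_abs_le _
      rw [hsplit]
      nlinarith [sq_nonneg (∑ i, δ i * (A - Sig) i j)]
    have hsum : (∑ j, (∑ i, δ i * Sig i j) ^ 2) - (q:ℝ) * (2 * (mS * m) * vl1 δ ^ 2)
        ≤ ∑ j, (∑ i, δ i * A i j) ^ 2 := by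
      have h1 := Finset.sum_le_sum (fun j (_ : j ∈ Finset.univ) => hkeyj j)
      rw [Finset.sum_sub_distrib, Finset.sum_const, Finset.card_univ, Fintype.card_fin,
        nsmul_eq_mul] at h1
      exact h1
    have hmem : (δ ⬝ᵥ (Sig * Sig.transpose).mulVec δ) / ((q:ℝ) * v2 ^ 2) ∈ setS :=
      ⟨δ, S, hδ, hcard, hres, hcone, rfl⟩
    have hSle : are p q s Sig ≤ (δ ⬝ᵥ (Sig * Sig.transpose).mulVec δ) / ((q:ℝ) * v2 ^ 2) := by
      rw [hareS]; exact csInf_le hbddS hmem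
    rw [quad] at hSle
    rw [quad]
    rcases Nat.eq_zero_or_pos q with hq | hq
    · have hc : ((q:ℕ):ℝ) = 0 := by exact_mod_cast hq
      rw [hc, zero_mul, div_zero] at hSle ⊢
      linarith
    · have hqpos : (0:ℝ) < q := by exact_mod_cast hq
      have hD : (0:ℝ) < (q:ℝ) * v2 ^ 2 := by positivity
      rw [le_div_iff₀ hD]
      have h1 : are p q s Sig * ((q:ℝ) * v2 ^ 2) ≤ ∑ j, (∑ i, δ i * Sig i j) ^ 2 :=
        (le_div_iff₀ hD).mp hSle
      have e1 : (q:ℝ) * (2 * (mS * m) * vl1 δ ^ 2) ≤ (q:ℝ) * (2 * (mS * m) * (16 * s * v2 ^ 2)) := by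
        have : 2 * (mS * m) * vl1 δ ^ 2 ≤ 2 * (mS * m) * (16 * s * v2 ^ 2) :=
          mul_le_mul_of_nonneg_left hL2 (by positivity)
        exact mul_le_mul_of_nonneg_left this (by positivity)
      have e2 : (32 * (s:ℝ) * m * mS) * ((q:ℝ) * v2 ^ 2)
          ≤ (are p q s Sig / 2) * ((q:ℝ) * v2 ^ 2) := by
        refine mul_le_mul_of_nonneg_right ?_ (by positivity)
        nlinarith [sq_nonneg m, hs]
      obtain ⟨aS, haS⟩ : ∃ aS : ℝ, aS = are p q s Sig := ⟨_, rfl⟩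
      rw [← haS] at h1 e2 ⊢
      nlinarith [h1, hsum, e1, e2]
  rcases Set.eq_empty_or_nonempty setS with hS | hS
  · have hAe : setA = ∅ := by
      rw [Set.eq_empty_iff_forall_notMem]
      rintro r ⟨δ, S, h1, h2, h3, h4, -⟩
      rw [Set.eq_empty_iff_forall_notMem] at hS
      exact hS _ ⟨δ, S, h1, h2, h3, h4, rfl⟩
    rw [hareA, hareS, hAe, hS, Real.sInf_empty]
    norm_num
  · have hAn : setA.Nonempty := by
      obtain ⟨r, δ, S, h1, h2, h3, h4, -⟩ := hS
      exact ⟨_, δ, S, h1, h2, h3, h4, rfl⟩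
    rw [hareA, ge_iff_le]
    exact le_csInf hAn key
end

section
/- Let β̂ minimize b ↦ (Y − Xb)'ZẆZ'(Y − Xb)/(n²q) + 2λ||b||_1 over R^p, where Ẇ is a symmetric positive semidefinite q×q matrix. If Y = Xβ_0 + u and 2|u'ZẆZ'X(β̂ − β_0)|/(n²q) ≤ λ||β̂ − β_0||_1, then with S_0 = supp(β_0): ||Ẇ^{1/2}Z'X(β̂ − β_0)||_2^2/(n²q) + λ ∑_{j ∉ S_0} |β̂_j| ≤ 3λ ∑_{j ∈ S_0} |β̂_j − β_{0j}|. -/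
open Matrix

theorem stmt15 (n p q : ℕ)
    (X : Matrix (Fin n) (Fin p) ℝ) (Z : Matrix (Fin n) (Fin q) ℝ)
    (What Whalf : Matrix (Fin q) (Fin q) ℝ)
    (hPSD : What.PosSemidef) (hhalfSymm : Whalf.IsSymm) (hhalf : Whalf * Whalf = What)
    (Y u : Fin n → ℝ) (beta0 betahat : Fin p → ℝ) (lam : ℝ) (hlam : 0 < lam)
    (hY : Y = X.mulVec beta0 + u)
    (hmin : ∀ b : Fin p → ℝ,
      ((Y - X.mulVec betahat) ⬝ᵥ (Z * What * Z.transpose).mulVec (Y - X.mulVec betahat))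
          / ((n : ℝ) ^ 2 * q) + 2 * lam * vl1 betahat ≤
      ((Y - X.mulVec b) ⬝ᵥ (Z * What * Z.transpose).mulVec (Y - X.mulVec b))
          / ((n : ℝ) ^ 2 * q) + 2 * lam * vl1 b)
    (hnoise : 2 * abs (u ⬝ᵥ (Z * What * Z.transpose).mulVec (X.mulVec (betahat - beta0)))
          / ((n : ℝ) ^ 2 * q) ≤ lam * vl1 (betahat - beta0))
    (S0 : Finset (Fin p)) (hS0 : S0 = Finset.univ.filter (fun j => beta0 j ≠ 0)) :
    vl2 (Whalf.mulVec (Z.transpose.mulVec (X.mulVec (betahat - beta0)))) ^ 2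
        / ((n : ℝ) ^ 2 * q)
      + lam * ∑ j ∈ S0ᶜ, |betahat j| ≤
      3 * lam * ∑ j ∈ S0, |betahat j - beta0 j| := by
  set A := Z * What * Z.transpose with hA
  clear_value A
  have hWs : What.transpose = What := by
    rw [← hhalf, transpose_mul, hhalfSymm.eq]
  have hAsymm : A.transpose = A := by
    rw [hA, transpose_mul, transpose_mul, transpose_transpose, hWs, ← Matrix.mul_assoc]
  set v := betahat - beta0 with hv
  set w := X.mulVec v with hw
  set D := ((n : ℝ) ^ 2 * q) with hD
  clear_value v w D
  have hDnn : 0 ≤ D := by rw [hD]; positivity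
  -- symmetry of dotProduct with A
  have hsymm : ∀ x y : Fin n → ℝ, x ⬝ᵥ A.mulVec y = y ⬝ᵥ A.mulVec x := by
    intro x y
    rw [dotProduct_mulVec, ← mulVec_transpose, hAsymm, dotProduct_comm]
  -- the quadratic form value equals vl2 squared
  have hz : Whalf.mulVec (Z.transpose.mulVec w) ⬝ᵥ Whalf.mulVec (Z.transpose.mulVec w)
      = w ⬝ᵥ A.mulVec w := calc
    Whalf.mulVec (Z.transpose.mulVec w) ⬝ᵥ Whalf.mulVec (Z.transpose.mulVec w)
        = (Whalfᵀ.mulVec (Whalf.mulVec (Z.transpose.mulVec w))) ⬝ᵥ (Z.transpose.mulVec w) := by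
          rw [dotProduct_mulVec, ← mulVec_transpose]
    _ = ((Whalf * Whalf).mulVec (Z.transpose.mulVec w)) ⬝ᵥ (Z.transpose.mulVec w) := by
          rw [hhalfSymm.eq, mulVec_mulVec]
    _ = (Z.transpose.mulVec w) ⬝ᵥ (What.mulVec (Z.transpose.mulVec w)) := by
          rw [hhalf, dotProduct_comm]
    _ = (w ᵥ* Z) ⬝ᵥ ((What * Z.transpose).mulVec w) := by
          rw [← mulVec_transpose, mulVec_mulVec]
    _ = w ⬝ᵥ ((Z * (What * Z.transpose)).mulVec w) := by
          rw [← dotProduct_mulVec, mulVec_mulVec]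
    _ = w ⬝ᵥ A.mulVec w := by rw [← Matrix.mul_assoc, ← hA]
  have hvl2 : vl2 (Whalf.mulVec (Z.transpose.mulVec w)) ^ 2 = w ⬝ᵥ A.mulVec w := by
    rw [← hz]
    unfold vl2
    rw [Real.sq_sqrt (by positivity)]
    simp [dotProduct, pow_two]
  -- plug b = beta0 into hmin
  have key := hmin beta0
  have hYb0 : Y - X.mulVec beta0 = u := by rw [hY]; abel
  have hYbh : Y - X.mulVec betahat = u - w := by
    rw [hY, hw, hv, mulVec_sub]; abel
  rw [hYb0, hYbh] at key
  have hexp : (u - w) ⬝ᵥ A.mulVec (u - w)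
      = u ⬝ᵥ A.mulVec u - 2 * (u ⬝ᵥ A.mulVec w) + w ⬝ᵥ A.mulVec w := by
    rw [mulVec_sub, sub_dotProduct, dotProduct_sub, dotProduct_sub, hsymm w u]
    ring
  rw [hexp] at key
  -- bound on the cross term
  have hcross : 2 * (u ⬝ᵥ A.mulVec w) / D ≤ lam * vl1 v := by
    refine le_trans ?_ hnoise
    rcases hDnn.eq_or_lt with h | h
    · rw [← h]; simp
    · gcongr
      exact le_abs_self _
  -- basic inequality
  have hbasic : w ⬝ᵥ A.mulVec w / D + 2 * lam * vl1 betahat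
      ≤ lam * vl1 v + 2 * lam * vl1 beta0 := by
    have h1 : (u ⬝ᵥ A.mulVec u - 2 * (u ⬝ᵥ A.mulVec w) + w ⬝ᵥ A.mulVec w) / D
        = u ⬝ᵥ A.mulVec u / D - 2 * (u ⬝ᵥ A.mulVec w) / D + w ⬝ᵥ A.mulVec w / D := by
      ring
    rw [h1] at key
    linarith [hcross]
  -- l1 splits
  have hb0compl : ∀ j ∈ S0ᶜ, beta0 j = 0 := by
    intro j hj
    simp [hS0, Finset.mem_compl, Finset.mem_filter] at hj
    exact hj
  have hsplit : ∀ x : Fin p → ℝ, vl1 x = ∑ j ∈ S0, |x j| + ∑ j ∈ S0ᶜ, |x j| := by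
    intro x
    rw [vl1, ← Finset.sum_add_sum_compl S0]
  have hvl1h : vl1 betahat = ∑ j ∈ S0, |betahat j| + ∑ j ∈ S0ᶜ, |betahat j| := hsplit _
  have hvl1v : vl1 v = ∑ j ∈ S0, |betahat j - beta0 j| + ∑ j ∈ S0ᶜ, |betahat j| := by
    rw [hsplit v]
    have h1 : ∑ j ∈ S0, |v j| = ∑ j ∈ S0, |betahat j - beta0 j| := by rw [hv]; rfl
    have h2 : ∑ j ∈ S0ᶜ, |v j| = ∑ j ∈ S0ᶜ, |betahat j| :=
      Finset.sum_congr rfl (fun j hj => by rw [hv]; simp [hb0compl j hj])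
    rw [h1, h2]
  have hvl1b0 : vl1 beta0 = ∑ j ∈ S0, |beta0 j| := by
    rw [hsplit beta0,
      Finset.sum_eq_zero (s := S0ᶜ) (fun j hj => by rw [hb0compl j hj, abs_zero]), add_zero]
  have htri : ∑ j ∈ S0, |beta0 j| - ∑ j ∈ S0, |betahat j|
      ≤ ∑ j ∈ S0, |betahat j - beta0 j| := by
    rw [← Finset.sum_sub_distrib]
    apply Finset.sum_le_sum
    intro j _
    have := abs_sub_abs_le_abs_sub (beta0 j) (betahat j)
    have h2 : |beta0 j - betahat j| = |betahat j - beta0 j| := abs_sub_comm _ _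
    linarith
  rw [hvl2]
  rw [hvl1h, hvl1v, hvl1b0] at hbasic
  nlinarith [hbasic, htri, hlam.le]
end
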